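/- Let f ∈ L¹((0,∞)) vanish outside [0,1]. Then the Mellin transform of f is completely monotone on (0,∞) if and only if f is nonnegative almost everywhere. -/

import Mathlib

/-!
Write `φ` for the Mellin transform of `f`. If `f ≥ 0`, differentiating under the integral sign gives
`(-1)ⁿ φ⁽ⁿ⁾(s) = ∫ f(t) (-log t)ⁿ t^(s-1) dt ≥ 0`, since `log t ≤ 0` on `(0, 1]`.

Conversely, `φ(s) - φ(s + 1)` is the transform of `f(t) (1 - t)`, and it is again completely
monotone because every signed derivative `(-1)ⁿ φ⁽ⁿ⁾` of a completely monotone function is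
antitone. Evaluating the transforms of `f(t) (1 - t)ᵏ` at `s = j + 2` shows that the Hausdorff
moments `∫ f(t) t · tʲ (1 - t)ᵏ dt` are nonnegative. Bernstein approximation turns this into
`∫ f(t) t g(t) dt ≥ 0` for every continuous `g ≥ 0`, thickened indicators into
`∫_K f(t) t dt ≥ 0` for closed `K`, and Lebesgue's differentiation theorem on closed balls into
`f ≥ 0` almost everywhere.
-/

open MeasureTheory Set Filter Topology Metric Real

-- `iteratedDeriv` is `0` where `φ` is not differentiable, so smoothness is not part of this notion.
def CompletelyMonotoneOn (φ : ℝ → ℝ) (S : Set ℝ) : Prop :=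
  ∀ n : ℕ, ∀ s ∈ S, 0 ≤ (-1 : ℝ) ^ n * iteratedDeriv n φ s

theorem CompletelyMonotoneOn.antitoneOn {φ : ℝ → ℝ} {S : Set ℝ} (hφ : CompletelyMonotoneOn φ S)
    (hS : Convex ℝ S) (hSo : IsOpen S)
    (hd : ∀ n, ∀ s ∈ S, DifferentiableAt ℝ (iteratedDeriv n φ) s) (n : ℕ) :
    AntitoneOn (fun s => (-1) ^ n * iteratedDeriv n φ s) S := by
  have hderiv : ∀ s ∈ S, HasDerivAt (fun s => (-1) ^ n * iteratedDeriv n φ s)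
      ((-1) ^ n * iteratedDeriv (n + 1) φ s) s := fun s hs => by
    rw [iteratedDeriv_succ]; exact (hd n s hs).hasDerivAt.const_mul _
  refine antitoneOn_of_hasDerivWithinAt_nonpos hS
    (f' := fun s => (-1) ^ n * iteratedDeriv (n + 1) φ s)
    (fun s hs => (hderiv s hs).continuousAt.continuousWithinAt) (fun s hs => ?_) (fun s hs => ?_)
  · rw [hSo.interior_eq] at hs ⊢; exact (hderiv s hs).hasDerivWithinAt
  · rw [hSo.interior_eq] at hs
    have := hφ (n + 1) s hs
    rw [pow_succ, mul_assoc, neg_one_mul, mul_neg] at this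
    linarith

lemma deriv_eq_zero_of_eventuallyEq_zero_left {φ : ℝ → ℝ} {s : ℝ} (h : φ =ᶠ[𝓝[<] s] 0) :
    deriv φ s = 0 := by
  by_cases hd : DifferentiableAt ℝ φ s
  · have h₀ : φ s = 0 :=
      tendsto_nhds_unique (hd.continuousAt.tendsto.mono_left nhdsWithin_le_nhds)
        (tendsto_const_nhds.congr' h.symm)
    exact (uniqueDiffWithinAt_Iio s).eq_deriv _ hd.hasDerivAt.hasDerivWithinAt
      ((hasDerivWithinAt_const s _ 0).congr_of_eventuallyEq h h₀)
  · exact deriv_zero_of_not_differentiableAt hd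

section Hausdorff

open scoped unitInterval

theorem integral_mul_nonneg_of_moments_nonneg {μ : Measure I} {F : I → ℝ} (hF : Integrable F μ)
    (hmom : ∀ j k : ℕ, 0 ≤ ∫ x, F x * ((x : ℝ) ^ j * (1 - (x : ℝ)) ^ k) ∂μ)
    {g : C(I, ℝ)} (hg : ∀ x, 0 ≤ g x) : 0 ≤ ∫ x, F x * g x ∂μ := by
  have hint : ∀ p : C(I, ℝ), Integrable (fun x => F x * p x) μ := fun p =>
    hF.mul_bdd p.continuous.aestronglyMeasurable (ae_of_all _ p.norm_coe_le_norm)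
  have hbern : ∀ n, 0 ≤ ∫ x, F x * bernsteinApproximation n g x ∂μ := by
    intro n
    have hexp : ∀ x, F x * bernsteinApproximation n g x =
        ∑ k : Fin (n + 1), F x * bernstein n k x * g (bernstein.z k) := fun x => by
      rw [bernsteinApproximation.apply, Finset.mul_sum]
      exact Finset.sum_congr rfl fun k _ => by rw [smul_eq_mul, mul_assoc]
    simp_rw [hexp]
    rw [integral_finsetSum _ fun k _ => (hint _).mul_const _]
    refine Finset.sum_nonneg fun k _ => ?_
    rw [integral_mul_const]
    refine mul_nonneg ?_ (hg _)
    have hcoeff : ∀ x : I, F x * bernstein n k x =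
        n.choose k * (F x * ((x : ℝ) ^ (k : ℕ) * (1 - (x : ℝ)) ^ (n - k))) := fun x => by
      rw [bernstein_apply]; ring
    simp_rw [hcoeff]
    rw [integral_const_mul]
    exact mul_nonneg (Nat.cast_nonneg _) (hmom _ _)
  have hunif := bernsteinApproximation_uniform g
  have hlim : Tendsto (fun n => ∫ x, F x * bernsteinApproximation n g x ∂μ) atTop
      (𝓝 (∫ x, F x * g x ∂μ)) := by
    refine tendsto_integral_filter_of_dominated_convergence (fun x => ‖F x‖ * (‖g‖ + 1))
      (Eventually.of_forall fun n => (hint _).aestronglyMeasurable) ?_ (hF.norm.mul_const _)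
      (ae_of_all _ fun x => ((((continuous_eval_const x).tendsto g).comp
        hunif).const_mul (F x)))
    filter_upwards [Metric.tendsto_nhds.mp hunif 1 one_pos] with n hn
    refine ae_of_all _ fun x => ?_
    have h₁ := ContinuousMap.dist_apply_le_dist (f := bernsteinApproximation n g) (g := g) x
    have h₂ := g.norm_coe_le_norm x
    rw [norm_mul]
    gcongr
    calc ‖bernsteinApproximation n g x‖ ≤ ‖g x‖ + dist (bernsteinApproximation n g x) (g x) :=
          by rw [dist_eq_norm]; exact norm_le_norm_add_norm_sub' _ _
      _ ≤ ‖g‖ + 1 := by linarith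
  exact ge_of_tendsto' hlim hbern

end Hausdorff

theorem setIntegral_nonneg_of_forall_integral_mul_nonneg {X : Type*} [PseudoMetricSpace X]
    [MeasurableSpace X] [OpensMeasurableSpace X] {μ : Measure X} {F : X → ℝ} (hF : Integrable F μ)
    (h : ∀ g : X → ℝ, Continuous g → (∀ x, 0 ≤ g x) → (∀ x, g x ≤ 1) → 0 ≤ ∫ x, F x * g x ∂μ)
    {K : Set X} (hK : IsClosed K) : 0 ≤ ∫ x in K, F x ∂μ := by
  have hδ : ∀ n : ℕ, (0 : ℝ) < 1 / (n + 1) := fun n => Nat.one_div_pos_of_nat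
  have hlim : Tendsto (fun n => ∫ x, F x * thickenedIndicator (hδ n) K x ∂μ) atTop
      (𝓝 (∫ x, F x * NNReal.toReal (K.indicator (fun _ => 1) x) ∂μ)) := by
    refine tendsto_integral_of_dominated_convergence (fun x => ‖F x‖)
      (fun n => hF.1.mul
        (thickenedIndicator (hδ n) K).continuous.measurable.coe_nnreal_real.aestronglyMeasurable)
      hF.norm (fun n => ae_of_all _ fun x => ?_) (ae_of_all _ fun x => ?_)
    · rw [norm_mul]
      refine mul_le_of_le_one_right (norm_nonneg _) ?_
      simpa using thickenedIndicator_le_one (hδ n) K x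
    · have := tendsto_pi_nhds.mp (thickenedIndicator_tendsto_indicator_closure hδ
        tendsto_one_div_add_atTop_nhds_zero_nat K) x
      rw [hK.closure_eq] at this
      exact (NNReal.tendsto_coe.mpr this).const_mul (F x)
  have hind : (fun x => F x * NNReal.toReal (K.indicator (fun _ => 1) x)) = K.indicator F := by
    ext x; by_cases hx : x ∈ K <;> simp [hx]
  rw [hind, integral_indicator hK.measurableSet] at hlim
  refine ge_of_tendsto' hlim fun n => h _ ?_ (fun x => by positivity) fun x => ?_
  · exact NNReal.continuous_coe.comp (thickenedIndicator (hδ n) K).continuous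
  · simpa using thickenedIndicator_le_one (hδ n) K x

theorem ae_nonneg_of_forall_setIntegral_closedBall_nonneg {X : Type*} [PseudoMetricSpace X]
    [MeasurableSpace X] [SecondCountableTopology X] [BorelSpace X] {μ : Measure X}
    [IsUnifLocDoublingMeasure μ] [IsLocallyFiniteMeasure μ] {F : X → ℝ}
    (hF : LocallyIntegrable F μ) (h : ∀ x r, 0 < r → 0 ≤ ∫ y in closedBall x r, F y ∂μ) :
    ∀ᵐ x ∂μ, 0 ≤ F x := by
  filter_upwards [IsUnifLocDoublingMeasure.ae_tendsto_average μ hF 1] with x hx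
  have := hx (fun _ => x) id tendsto_id
    (eventually_nhdsWithin_of_forall fun r hr => mem_closedBall_self (by simpa using hr.le))
  refine ge_of_tendsto this (eventually_nhdsWithin_of_forall fun r hr => ?_)
  rw [setAverage_eq]
  exact smul_nonneg (by positivity) (h x r hr)

noncomputable def realMellin (g : ℝ → ℝ) (s : ℝ) : ℝ := ∫ t in Ioi 0, g t * t ^ (s - 1)

section Mellin

variable {g : ℝ → ℝ} {a : ℝ}

lemma abs_log_pow_mul_rpow_le {t ε u : ℝ} (n : ℕ) (ht₀ : 0 < t) (ht₁ : t ≤ 1) (hε : 0 < ε)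
    (hu : a + n * ε ≤ u) : |log t ^ n * t ^ (u - 1)| ≤ ε⁻¹ ^ n * t ^ (a - 1) := by
  have hpow : t ^ (u - 1) ≤ (t ^ ε) ^ n * t ^ (a - 1) := by
    rw [← rpow_natCast, ← rpow_mul ht₀.le, ← rpow_add ht₀]
    exact rpow_le_rpow_of_exponent_ge ht₀ ht₁ (by linarith)
  have hlog : |log t * t ^ ε| ≤ ε⁻¹ := by
    simpa only [one_div] using (abs_log_mul_self_rpow_lt t ε ht₀ ht₁ hε).le
  calc |log t ^ n * t ^ (u - 1)| = |log t| ^ n * t ^ (u - 1) := by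
        rw [abs_mul, abs_pow, abs_of_nonneg (rpow_nonneg ht₀.le _)]
    _ ≤ |log t| ^ n * ((t ^ ε) ^ n * t ^ (a - 1)) := by gcongr
    _ = |log t * t ^ ε| ^ n * t ^ (a - 1) := by
        rw [abs_mul, abs_of_nonneg (by positivity : 0 ≤ t ^ ε)]; ring
    _ ≤ ε⁻¹ ^ n * t ^ (a - 1) := by gcongr

lemma norm_mul_log_pow_mul_rpow_le (hg : ∀ t, 1 < t → g t = 0) {t ε u : ℝ} (n : ℕ) (ht : 0 < t)
    (hε : 0 < ε) (hu : a + n * ε ≤ u) :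
    ‖g t * log t ^ n * t ^ (u - 1)‖ ≤ ε⁻¹ ^ n * ‖g t * t ^ (a - 1)‖ := by
  rcases le_or_gt t 1 with ht₁ | ht₁
  · calc ‖g t * log t ^ n * t ^ (u - 1)‖ = |g t| * |log t ^ n * t ^ (u - 1)| := by
          rw [mul_assoc, norm_mul, Real.norm_eq_abs, Real.norm_eq_abs]
      _ ≤ |g t| * (ε⁻¹ ^ n * t ^ (a - 1)) := by
          gcongr; exact abs_log_pow_mul_rpow_le n ht ht₁ hε hu
      _ = ε⁻¹ ^ n * ‖g t * t ^ (a - 1)‖ := by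
          rw [norm_mul, Real.norm_eq_abs, Real.norm_eq_abs, abs_of_nonneg (rpow_nonneg ht.le _)]
          ring
  · simp [hg t ht₁]

lemma aestronglyMeasurable_of_integrableOn_mul_rpow
    (ha : IntegrableOn (fun t => g t * t ^ (a - 1)) (Ioi 0)) :
    AEStronglyMeasurable g (volume.restrict (Ioi 0)) := by
  refine (ha.aestronglyMeasurable.mul
    (measurable_id.pow_const (1 - a)).aestronglyMeasurable).congr ?_
  filter_upwards [ae_restrict_mem measurableSet_Ioi] with t ht
  show g t * t ^ (a - 1) * t ^ (1 - a) = g t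
  rw [mul_assoc, ← rpow_add ht, sub_add_sub_cancel', sub_self, rpow_zero, mul_one]

lemma aestronglyMeasurable_mul_log_pow_mul_rpow
    (ha : IntegrableOn (fun t => g t * t ^ (a - 1)) (Ioi 0)) (n : ℕ) (s : ℝ) :
    AEStronglyMeasurable (fun t => g t * log t ^ n * t ^ (s - 1)) (volume.restrict (Ioi 0)) :=
  ((aestronglyMeasurable_of_integrableOn_mul_rpow ha).mul
    (measurable_log.pow_const n).aestronglyMeasurable).mul
    (measurable_id.pow_const _).aestronglyMeasurable

lemma integrableOn_mul_log_pow_mul_rpow (hg : ∀ t, 1 < t → g t = 0)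
    (ha : IntegrableOn (fun t => g t * t ^ (a - 1)) (Ioi 0)) (n : ℕ) {s : ℝ} (hs : a < s) :
    IntegrableOn (fun t => g t * log t ^ n * t ^ (s - 1)) (Ioi 0) := by
  set ε := (s - a) / (n + 1)
  have hε : 0 < ε := by apply div_pos <;> linarith
  refine (ha.norm.const_mul (ε⁻¹ ^ n)).mono' (aestronglyMeasurable_mul_log_pow_mul_rpow ha n s) ?_
  filter_upwards [ae_restrict_mem measurableSet_Ioi] with t ht
  refine norm_mul_log_pow_mul_rpow_le hg n ht hε ?_
  have : s = a + (n + 1) * ε := by simp only [ε]; field_simp; ring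
  nlinarith

theorem hasDerivAt_realMellin (hg : ∀ t, 1 < t → g t = 0)
    (ha : IntegrableOn (fun t => g t * t ^ (a - 1)) (Ioi 0)) (n : ℕ) {s : ℝ} (hs : a < s) :
    HasDerivAt (realMellin fun t => g t * log t ^ n)
      (realMellin (fun t => g t * log t ^ (n + 1)) s) s := by
  set ε := (s - a) / (n + 2)
  have hε : 0 < ε := by apply div_pos <;> linarith
  have hsε : s = a + (n + 2) * ε := by simp only [ε]; field_simp; ring
  refine (hasDerivAt_integral_of_dominated_loc_of_deriv_le (μ := volume.restrict (Ioi 0))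
    (F' := fun u t => g t * log t ^ (n + 1) * t ^ (u - 1))
    (bound := fun t => ε⁻¹ ^ (n + 1) * ‖g t * t ^ (a - 1)‖) (ball_mem_nhds s hε)
    (Eventually.of_forall (aestronglyMeasurable_mul_log_pow_mul_rpow ha n))
    (integrableOn_mul_log_pow_mul_rpow hg ha n hs)
    (aestronglyMeasurable_mul_log_pow_mul_rpow ha (n + 1) s) ?_ (ha.norm.const_mul _) ?_).2
  · filter_upwards [ae_restrict_mem measurableSet_Ioi] with t ht u hu
    refine norm_mul_log_pow_mul_rpow_le hg (n + 1) ht hε ?_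
    have := (abs_lt.mp (mem_ball_iff_norm.mp hu)).1
    push_cast
    linarith
  · filter_upwards [ae_restrict_mem measurableSet_Ioi] with t ht u _
    have := ((hasStrictDerivAt_const_rpow ht (u - 1)).hasDerivAt.comp u
      ((hasDerivAt_id u).sub_const 1)).const_mul (g t * log t ^ n)
    exact this.congr_deriv (by ring)

theorem iteratedDeriv_realMellin (hg : ∀ t, 1 < t → g t = 0)
    (ha : IntegrableOn (fun t => g t * t ^ (a - 1)) (Ioi 0)) (n : ℕ) {s : ℝ} (hs : a < s) :
    iteratedDeriv n (realMellin g) s = realMellin (fun t => g t * log t ^ n) s := by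
  induction n generalizing s with
  | zero => simp only [iteratedDeriv_zero, pow_zero, mul_one]
  | succ n ih =>
    have : iteratedDeriv n (realMellin g) =ᶠ[𝓝 s] realMellin fun t => g t * log t ^ n :=
      eventually_of_mem (Ioi_mem_nhds hs) fun u hu => ih hu
    rw [iteratedDeriv_succ, this.deriv_eq, (hasDerivAt_realMellin hg ha n hs).deriv]

theorem hasDerivAt_iteratedDeriv_realMellin (hg : ∀ t, 1 < t → g t = 0)
    (ha : IntegrableOn (fun t => g t * t ^ (a - 1)) (Ioi 0)) (n : ℕ) {s : ℝ} (hs : a < s) :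
    HasDerivAt (iteratedDeriv n (realMellin g)) (iteratedDeriv (n + 1) (realMellin g) s) s := by
  rw [iteratedDeriv_realMellin hg ha (n + 1) hs]
  exact (hasDerivAt_realMellin hg ha n hs).congr_of_eventuallyEq
    (eventually_of_mem (Ioi_mem_nhds hs) fun u hu => iteratedDeriv_realMellin hg ha n hu)

lemma realMellin_mul_one_sub {s : ℝ}
    (h₀ : IntegrableOn (fun t => g t * t ^ (s - 1)) (Ioi 0))
    (h₁ : IntegrableOn (fun t => g t * t ^ (s + 1 - 1)) (Ioi 0)) :
    realMellin (fun t => g t * (1 - t)) s = realMellin g s - realMellin g (s + 1) := by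
  rw [realMellin, realMellin, realMellin, ← integral_sub h₀ h₁]
  refine setIntegral_congr_fun measurableSet_Ioi fun t ht => ?_
  rw [show s + 1 - 1 = s - 1 + 1 by ring, rpow_add_one (ne_of_gt ht)]
  ring

lemma neg_one_pow_mul_realMellin_mul_log_pow_nonneg (hg : ∀ t, 1 < t → g t = 0)
    (hpos : ∀ᵐ t ∂(volume.restrict (Ioi 0)), 0 ≤ g t) (n : ℕ) (s : ℝ) :
    0 ≤ (-1) ^ n * realMellin (fun t => g t * log t ^ n) s := by
  rw [realMellin, ← integral_const_mul]
  refine setIntegral_nonneg_of_ae_restrict ?_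
  filter_upwards [hpos, ae_restrict_mem measurableSet_Ioi] with t hgt ht
  rcases le_or_gt t 1 with ht₁ | ht₁
  · have hlog : 0 ≤ (-1) ^ n * log t ^ n := by
      rw [← mul_pow]; exact pow_nonneg (by nlinarith [log_nonpos ht.le ht₁]) n
    calc (0 : ℝ) ≤ g t * ((-1) ^ n * log t ^ n) * t ^ (s - 1) := by
          have := rpow_nonneg ht.le (s - 1); positivity
      _ = _ := by ring
  · simp [hg t ht₁]

theorem completelyMonotoneOn_realMellin (hg : ∀ t, 1 < t → g t = 0)
    (hpos : ∀ᵐ t ∂(volume.restrict (Ioi 0)), 0 ≤ g t) :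
    CompletelyMonotoneOn (realMellin g) univ := by
  rintro (_ | n) s -
  · simpa using neg_one_pow_mul_realMellin_mul_log_pow_nonneg hg hpos 0 s
  by_cases hconv : ∃ a < s, IntegrableOn (fun t => g t * t ^ (a - 1)) (Ioi 0)
  · obtain ⟨a, has, ha⟩ := hconv
    rw [iteratedDeriv_realMellin hg ha (n + 1) has]
    exact neg_one_pow_mul_realMellin_mul_log_pow_nonneg hg hpos (n + 1) s
  · -- Left of the region of absolute convergence the integral is the junk value `0`, so the
    -- derivative at `s` can only be `0`.
    push Not at hconv
    have hzero : EqOn (realMellin g) 0 (Iio s) := fun u hu => integral_undef (hconv u hu)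
    have hzero' : iteratedDeriv n (realMellin g) =ᶠ[𝓝[<] s] 0 :=
      eventually_nhdsWithin_of_forall fun u hu => by
        rw [hzero.iteratedDeriv_of_isOpen isOpen_Iio n hu, Pi.zero_apply, iteratedDeriv_const_zero]
    rw [iteratedDeriv_succ, deriv_eq_zero_of_eventuallyEq_zero_left hzero', mul_zero]

end Mellin

section Backward

open scoped unitInterval

variable {f : ℝ → ℝ}

lemma integrableOn_mul_one_sub_pow (hf : IntegrableOn f (Ioi 0)) (hvan : ∀ t, 1 < t → f t = 0)
    (k : ℕ) : IntegrableOn (fun t => f t * (1 - t) ^ k * t ^ ((1 : ℝ) - 1)) (Ioi 0) := by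
  have : IntegrableOn (fun t => f t * (1 - t) ^ k) (Ioi 0) := by
    refine hf.norm.mono' (hf.1.mul (Continuous.aestronglyMeasurable (by fun_prop))) ?_
    filter_upwards [ae_restrict_mem measurableSet_Ioi] with t ht
    rcases le_or_gt t 1 with ht₁ | ht₁
    · rw [norm_mul, norm_pow]
      refine mul_le_of_le_one_right (norm_nonneg _) (pow_le_one₀ (norm_nonneg _) ?_)
      rw [Real.norm_eq_abs, abs_le]; constructor <;> linarith [mem_Ioi.mp ht]
    · simp [hvan t ht₁]
  simpa using this

theorem completelyMonotoneOn_realMellin_mul_one_sub_pow (hf : IntegrableOn f (Ioi 0))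
    (hvan : ∀ t, 1 < t → f t = 0) (hcm : CompletelyMonotoneOn (realMellin f) (Ioi 1)) (k : ℕ) :
    CompletelyMonotoneOn (realMellin fun t => f t * (1 - t) ^ k) (Ioi 1) := by
  induction k with
  | zero => simpa using hcm
  | succ k ih =>
    have hvan' : ∀ j : ℕ, ∀ t, 1 < t → f t * (1 - t) ^ j = 0 := fun j t ht => by
      simp [hvan t ht]
    have ha := integrableOn_mul_one_sub_pow hf hvan k
    have hanti := ih.antitoneOn (convex_Ioi 1) isOpen_Ioi fun n s hs =>
      (hasDerivAt_iteratedDeriv_realMellin (hvan' k) ha n hs).differentiableAt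
    intro n s hs
    have hs₁ : s + 1 ∈ Ioi (1 : ℝ) := by simp only [mem_Ioi] at hs ⊢; linarith
    rw [iteratedDeriv_realMellin (hvan' (k + 1))
      (integrableOn_mul_one_sub_pow hf hvan (k + 1)) n hs]
    have hshift := realMellin_mul_one_sub (integrableOn_mul_log_pow_mul_rpow (hvan' k) ha n hs)
      (integrableOn_mul_log_pow_mul_rpow (hvan' k) ha n hs₁)
    rw [← iteratedDeriv_realMellin (hvan' k) ha n hs,
      ← iteratedDeriv_realMellin (hvan' k) ha n hs₁] at hshift
    have hfun : (fun t => f t * (1 - t) ^ (k + 1) * log t ^ n) =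
        fun t => f t * (1 - t) ^ k * log t ^ n * (1 - t) := by
      ext t; ring
    rw [hfun, hshift, mul_sub, sub_nonneg]
    exact hanti n hs hs₁ (by linarith)

lemma integral_unitInterval_eq_setIntegral_Ioi {φ : ℝ → ℝ} (hφ : ∀ t, 1 < t → φ t = 0) :
    ∫ x : I, φ x = ∫ t in Ioi 0, φ t := by
  rw [unitInterval.measurePreserving_coe.integral_comp unitInterval.measurableEmbedding_coe,
    integral_Icc_eq_integral_Ioc,
    ← setIntegral_eq_of_subset_of_forall_sdiff_eq_zero measurableSet_Ioi Ioc_subset_Ioi_self]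
  rintro t ⟨ht₀, ht⟩
  exact hφ t (not_le.mp fun ht₁ => ht ⟨ht₀, ht₁⟩)

theorem moment_nonneg_of_completelyMonotoneOn_realMellin (hf : IntegrableOn f (Ioi 0))
    (hvan : ∀ t, 1 < t → f t = 0)
    (hcm : CompletelyMonotoneOn (realMellin f) (Ioi 1)) (j k : ℕ) :
    0 ≤ ∫ x : I, f x * x * ((x : ℝ) ^ j * (1 - (x : ℝ)) ^ k) := by
  have := completelyMonotoneOn_realMellin_mul_one_sub_pow hf hvan hcm k 0 (j + 2)
    (by rw [mem_Ioi]; linarith [(j.cast_nonneg : (0 : ℝ) ≤ j)])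
  rw [pow_zero, one_mul, iteratedDeriv_zero, realMellin] at this
  rw [integral_unitInterval_eq_setIntegral_Ioi (φ := fun t => f t * t * (t ^ j * (1 - t) ^ k))
    fun t ht => by simp [hvan t ht]]
  convert this using 1
  refine setIntegral_congr_fun measurableSet_Ioi fun t ht => ?_
  rw [show (j : ℝ) + 2 - 1 = (j + 1 : ℕ) by push_cast; ring, rpow_natCast]
  ring

theorem ae_nonneg_of_completelyMonotoneOn_realMellin (hf : IntegrableOn f (Ioi 0))
    (hvan : ∀ t, 1 < t → f t = 0) (hcm : CompletelyMonotoneOn (realMellin f) (Ioi 1)) :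
    ∀ᵐ t ∂(volume.restrict (Ioi 0)), 0 ≤ f t := by
  set F : ℝ → ℝ := (Icc 0 1).indicator fun t => f t * t
  have hfI : IntegrableOn f (Icc 0 1) := by
    rw [integrableOn_Icc_iff_integrableOn_Ioc]; exact hf.mono_set Ioc_subset_Ioi_self
  have hFI : IntegrableOn (fun t => f t * t) (Icc 0 1) :=
    hfI.mul_continuousOn continuousOn_id isCompact_Icc
  have hF : Integrable F := (integrable_indicator_iff measurableSet_Icc).2 hFI
  have hpos : ∀ g : ℝ → ℝ, Continuous g → (∀ x, 0 ≤ g x) → (∀ x, g x ≤ 1) →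
      0 ≤ ∫ x, F x * g x := by
    intro g hg hg₀ _
    have : ∫ x, F x * g x = ∫ x : I, f x * x * g x := by
      rw [unitInterval.measurePreserving_coe.integral_comp unitInterval.measurableEmbedding_coe
        (fun t => f t * t * g t), ← integral_indicator measurableSet_Icc]
      congr 1 with x
      by_cases hx : x ∈ Icc (0 : ℝ) 1 <;> simp [F, hx]
    rw [this]
    exact integral_mul_nonneg_of_moments_nonneg
      ((unitInterval.measurePreserving_coe.integrable_comp_emb
        unitInterval.measurableEmbedding_coe).2 hFI)
      (moment_nonneg_of_completelyMonotoneOn_realMellin hf hvan hcm)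
      (g := ⟨fun x => g x, by fun_prop⟩) fun x => hg₀ x
  have hae := ae_nonneg_of_forall_setIntegral_closedBall_nonneg hF.locallyIntegrable
    fun x r _ => setIntegral_nonneg_of_forall_integral_mul_nonneg hF hpos isClosed_closedBall
  rw [ae_restrict_iff' measurableSet_Ioi]
  filter_upwards [hae] with t ht (ht₀ : 0 < t)
  rcases le_or_gt t 1 with ht₁ | ht₁
  · rw [show F t = f t * t from indicator_of_mem (show t ∈ Icc (0 : ℝ) 1 from ⟨ht₀.le, ht₁⟩) _]
      at ht
    exact nonneg_of_mul_nonneg_left ht ht₀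
  · exact (hvan t ht₁).ge

end Backward

open MeasureTheory in
/-- For f ∈ L¹((0,∞)) vanishing outside [0,1], the Mellin transform of f is completely monotone
on (0,∞) iff f is nonnegative almost everywhere. -/
theorem stmt9 (f : ℝ → ℝ)
    (hf : IntegrableOn f (Set.Ioi 0))
    (hsupp : ∀ t : ℝ, t ∉ Set.Icc (0 : ℝ) 1 → f t = 0) :
    (∀ (n : ℕ), ∀ s : ℝ, 0 < s →
        0 ≤ (-1 : ℝ) ^ n *
          iteratedDeriv n (fun u => ∫ t in Set.Ioi (0 : ℝ), f t * t ^ (u - 1)) s) ↔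
    (∀ᵐ t ∂(volume.restrict (Set.Ioi (0 : ℝ))), 0 ≤ f t) := by
  have hvan : ∀ t, 1 < t → f t = 0 := fun t ht => hsupp t fun h => ht.not_ge h.2
  exact ⟨fun hcm => ae_nonneg_of_completelyMonotoneOn_realMellin hf hvan
      fun n s hs => hcm n s (zero_lt_one.trans hs),
    fun hpos n s _ => completelyMonotoneOn_realMellin hvan hpos n s trivial⟩
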